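/- For any prime p ≥ 5 and any positive integer r, the sum ∑_{n=0}^{rp-1} binomial(2n, n) is congruent to α_r modulo p^2 if p ≡ 1 (mod 3), and congruent to -α_r modulo p^2 if p ≡ 2 (mod 3), where α_r = ∑_{n=0}^{r-1} binomial(2n, n). -/

import Mathlib

/-!
Let `χ` be the nontrivial character modulo 3. Pascal's rule together with
`χ d + χ (d + 1) + χ (d + 2) = 0` makes `∑_{d ≤ N} χ(d) C(2N, N + d)` grow by `C(2N, N)` from
`N` to `N + 1`, so it equals `∑_{n < N} C(2n, n)`.

Modulo `p²` the polynomial `v = (1 + X)^p - 1 - X^p` squares to zero (its coefficients are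
divisible by `p`), hence `(1 + X)^{Ap} ≡ (1 + X^p)^A + A v (1 + X^p)^{A-1}`. Reading off
coefficients: `C(Ap, Bp) ≡ C(A, B)` and `C(Ap, Bp + f) ≡ A C(A-1, B) C(p, f)` for `0 < f < p`.
In `∑_{d ≤ rp} χ(d) C(2rp, rp + d)` write `d = ep + f`. For odd `p` prime to 3,
`∑_{0<f<p} C(p, f) χ(a + f) = 0`, since the full binomial sum is `-χ(a + 2p)`; so only the
terms `f = 0` survive, and they add up to `χ(p) ∑_{e ≤ r} χ(e) C(2r, r + e)`, which is
`χ(p) ∑_{n < r} C(2n, n)` by the first identity.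
-/

open Finset Polynomial

local notation "χ" => quadraticChar (ZMod 3)

theorem chi_add_add_two_mul (a q : ZMod 3) (hq : q ≠ 0) :
    χ a + χ (a + q) + χ (a + 2 * q) = 0 := by
  revert a q; decide

theorem sum_range_choose_mul_chi (m : ℕ) (a : ZMod 3) :
    ∑ f ∈ range (m + 1), (m.choose f : ℤ) * χ (a + f) = (-1) ^ m * χ (a + 2 * m) := by
  induction m generalizing a with
  | zero => simp
  | succ m ih =>
    rw [sum_choose_succ_mul (fun f _ => χ (a + f)) m]
    have h := chi_add_add_two_mul (a + 2 * m) 1 one_ne_zero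
    push_cast
    simp only [← add_assoc, add_right_comm a _ (1 : ZMod 3)]
    rw [ih, ih (a + 1)]
    ring_nf at h ⊢
    linear_combination (-1) ^ m * h

theorem sum_Ico_choose_mul_chi {p : ℕ} (hodd : Odd p) (h3 : (p : ZMod 3) ≠ 0) (a : ZMod 3) :
    ∑ f ∈ Ico 1 p, (p.choose f : ℤ) * χ (a + f) = 0 := by
  have h := sum_range_choose_mul_chi p a
  rw [sum_range_succ, sum_range_eq_add_Ico _ hodd.pos] at h
  simp only [Nat.choose_zero_right, Nat.choose_self, Nat.cast_zero, Nat.cast_one, add_zero,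
    one_mul, hodd.neg_one_pow] at h
  linear_combination h - chi_add_add_two_mul a p h3

theorem choose_add_two_add_two (n k : ℕ) :
    (n + 2).choose (k + 2) = n.choose k + 2 * n.choose (k + 1) + n.choose (k + 2) := by
  simp only [Nat.choose_succ_succ]
  ring

def chiBinomialSum (N : ℕ) : ℤ :=
  ∑ d ∈ range (N + 1), χ (d : ZMod 3) * (2 * N).choose (N + d)

theorem chiBinomialSum_succ (N : ℕ) :
    chiBinomialSum (N + 1) = chiBinomialSum N + (2 * N).choose N := by
  set a : ℕ → ℤ := fun k => ((2 * N).choose k : ℤ) with ha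
  set g : ℕ → ℤ := fun d =>
    (χ (d + 1 : ZMod 3) - χ (d : ZMod 3)) * a (N + d) - χ (d : ZMod 3) * a (N + d + 1) with hg
  have telescope (d : ℕ) :
      χ ((d + 1 : ℕ) : ZMod 3) * ((2 * (N + 1)).choose (N + 1 + (d + 1)) : ℤ) =
        χ (d : ZMod 3) * a (N + d) + (g d - g (d + 1)) := by
    have h := chi_add_add_two_mul (d : ZMod 3) 1 one_ne_zero
    rw [show 2 * (N + 1) = 2 * N + 2 by ring, show N + 1 + (d + 1) = N + d + 2 by ring,
      choose_add_two_add_two]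
    simp only [hg, ha]
    push_cast
    ring_nf at h ⊢
    linear_combination (norm := ring_nf) ((2 * N).choose (N + d + 1) : ℤ) * h
  rw [chiBinomialSum, sum_range_succ', sum_congr rfl fun d _ => telescope d, sum_add_distrib,
    sum_range_sub']
  simp [chiBinomialSum, hg, ha, Nat.choose_eq_zero_of_lt (by omega : 2 * N < N + (N + 1)),
    Nat.choose_eq_zero_of_lt (by omega : 2 * N < N + (N + 1) + 1)]

theorem sum_range_centralBinom_eq_chiBinomialSum (N : ℕ) :
    ∑ n ∈ range N, (n.centralBinom : ℤ) = chiBinomialSum N := by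
  induction N with
  | zero => simp [chiBinomialSum]
  | succ N ih => rw [sum_range_succ, ih, chiBinomialSum_succ, Nat.centralBinom]

theorem sum_range_mul_eq_sum_sum {M : Type*} [AddCommMonoid M] (g : ℕ → M) (r p : ℕ) :
    ∑ i ∈ range (r * p), g i = ∑ e ∈ range r, ∑ j ∈ range p, g (e * p + j) := by
  induction r with
  | zero => simp
  | succ r ih => rw [add_mul, one_mul, sum_range_add, ih, sum_range_succ]

theorem add_pow_of_sq_eq_zero {R : Type*} [CommRing R] (x y : R) (hy : y ^ 2 = 0) (n : ℕ) :
    (x + y) ^ n = x ^ n + n * x ^ (n - 1) * y := by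
  simpa [derivative_X_pow] using eval_add_of_sq_eq_zero (X ^ n) x y hy

theorem coeff_mul_expand {R : Type*} [CommSemiring R] {p : ℕ} (hp : 0 < p) {v : R[X]}
    (hv : v.degree < p) (g : R[X]) (B : ℕ) {f : ℕ} (hf : f < p) :
    (v * expand R p g).coeff (B * p + f) = v.coeff f * g.coeff B := by
  rw [coeff_mul, sum_eq_single_of_mem (f, B * p) (by simp [add_comm]), coeff_expand_mul hp]
  rintro ⟨i, j⟩ hij hne
  rw [HasAntidiagonal.mem_antidiagonal] at hij
  rcases lt_or_ge i p with hi | hi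
  · rw [coeff_expand hp, if_neg, mul_zero]
    rintro ⟨c, rfl⟩
    obtain rfl : i = f := by
      simpa [Nat.mod_eq_of_lt hi, Nat.mod_eq_of_lt hf] using congrArg (· % p) hij
    exact hne (by simp only [Prod.mk.injEq, true_and]; omega)
  · rw [(degree_lt_iff_coeff_zero v p).mp hv i (by exact_mod_cast hi), zero_mul]

section SqZero

variable {R : Type*} [CommRing R] {p : ℕ}

theorem coeff_one_add_X_pow_sub (i : ℕ) :
    ((1 + X) ^ p - 1 - X ^ p : R[X]).coeff i =
      p.choose i - (if i = 0 then 1 else 0) - (if i = p then 1 else 0) := by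
  simp [coeff_one_add_X_pow, coeff_one, coeff_X_pow, eq_comm]

theorem degree_one_add_X_pow_sub_lt (hp : 0 < p) :
    ((1 + X) ^ p - 1 - X ^ p : R[X]).degree < p := by
  rw [degree_lt_iff_coeff_zero]
  intro i hi
  have hi : p ≤ i := by exact_mod_cast hi
  rw [coeff_one_add_X_pow_sub]
  rcases hi.eq_or_lt with rfl | hi
  · simp [hp.ne']
  · simp [Nat.choose_eq_zero_of_lt hi, hi.ne', (hp.trans hi).ne']

theorem one_add_X_pow_sub_sq_eq_zero (hp : p.Prime) (hR : (p : R) ^ 2 = 0) :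
    ((1 + X) ^ p - 1 - X ^ p : R[X]) ^ 2 = 0 := by
  obtain ⟨w, hw⟩ : C (p : ℤ) ∣ (1 + X) ^ p - 1 - X ^ p := by
    rw [C_dvd_iff_dvd_coeff]
    intro i
    rw [coeff_one_add_X_pow_sub]
    rcases Nat.eq_zero_or_pos i with rfl | hi
    · simp [hp.pos.ne]
    rcases lt_trichotomy i p with hip | rfl | hip
    · simpa [hi.ne', hip.ne] using Int.natCast_dvd_natCast.mpr (hp.dvd_choose_self hi.ne' hip)
    · simp [hp.ne_zero]
    · simp [Nat.choose_eq_zero_of_lt hip, hi.ne', hip.ne']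
  have := congrArg (fun P => P.map (Int.castRingHom R) ^ 2) hw
  simp only [Polynomial.map_sub, Polynomial.map_pow, Polynomial.map_add, Polynomial.map_one,
    map_X, Polynomial.map_mul, Polynomial.map_C] at this
  rw [this, mul_pow, ← C_pow]
  simp [hR]

theorem one_add_X_pow_mul (hp : p.Prime) (hR : (p : R) ^ 2 = 0) (A : ℕ) :
    ((1 + X) ^ (A * p) : R[X]) = expand R p ((1 + X) ^ A) +
      (A : R[X]) * ((1 + X) ^ p - 1 - X ^ p) * expand R p ((1 + X) ^ (A - 1)) := by
  have hsplit : ((1 + X) ^ p : R[X]) = expand R p (1 + X) + ((1 + X) ^ p - 1 - X ^ p) := by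
    simp
  conv_lhs => rw [pow_mul', hsplit]
  rw [add_pow_of_sq_eq_zero _ _ (one_add_X_pow_sub_sq_eq_zero hp hR), map_pow, map_pow]
  ring

theorem natCast_choose_mul_add (hp : p.Prime) (hR : (p : R) ^ 2 = 0) (A B : ℕ) {f : ℕ}
    (hf : f < p) :
    ((A * p).choose (B * p + f) : R) = (if f = 0 then (A.choose B : R) else 0) +
      A * ((1 + X) ^ p - 1 - X ^ p : R[X]).coeff f * (A - 1).choose B := by
  have h := congrArg (coeff · (B * p + f)) (one_add_X_pow_mul hp hR A)
  simp only [coeff_one_add_X_pow, coeff_add] at h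
  rw [h, ← one_mul (expand R p _),
    coeff_mul_expand hp.pos (degree_one_le.trans_lt (by exact_mod_cast hp.pos)) _ _ hf,
    mul_assoc, ← C_eq_natCast, coeff_C_mul,
    coeff_mul_expand hp.pos (degree_one_add_X_pow_sub_lt hp.pos) _ _ hf]
  simp [coeff_one, coeff_one_add_X_pow, eq_comm, mul_assoc]

theorem natCast_choose_mul_mul (hp : p.Prime) (hR : (p : R) ^ 2 = 0) (A B : ℕ) :
    ((A * p).choose (B * p) : R) = A.choose B := by
  simpa [coeff_one_add_X_pow, hp.pos.ne] using natCast_choose_mul_add hp hR A B hp.pos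

theorem natCast_choose_mul_add_of_pos (hp : p.Prime) (hR : (p : R) ^ 2 = 0) (A B : ℕ) {f : ℕ}
    (hf0 : 0 < f) (hf : f < p) :
    ((A * p).choose (B * p + f) : R) = A * (A - 1).choose B * p.choose f := by
  rw [natCast_choose_mul_add hp hR A B hf, coeff_one_add_X_pow_sub]
  simp only [if_neg hf0.ne', if_neg hf.ne, sub_zero, zero_add]
  ring

theorem sum_range_chi_mul_choose_mul_add (hp : p.Prime) (hR : (p : R) ^ 2 = 0) (hodd : Odd p)
    (h3 : (p : ZMod 3) ≠ 0) (a : ZMod 3) (A B : ℕ) :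
    ∑ f ∈ range p, (χ (a + f) : R) * ((A * p).choose (B * p + f) : R) = χ a * A.choose B := by
  have hIco : ∑ f ∈ Ico 1 p, (χ (a + f) : R) * ((A * p).choose (B * p + f) : R) =
      A * (A - 1).choose B * ((∑ f ∈ Ico 1 p, (p.choose f : ℤ) * χ (a + f) : ℤ) : R) := by
    push_cast
    rw [mul_sum]
    refine sum_congr rfl fun f hf => ?_
    rw [mem_Ico] at hf
    rw [natCast_choose_mul_add_of_pos hp hR A B hf.1 hf.2]
    ring
  rw [sum_range_eq_add_Ico _ hp.pos, hIco, sum_Ico_choose_mul_chi hodd h3]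
  simp [natCast_choose_mul_mul hp hR]

theorem natCast_chiBinomialSum_mul (hp : p.Prime) (hR : (p : R) ^ 2 = 0) (hodd : Odd p)
    (h3 : (p : ZMod 3) ≠ 0) (r : ℕ) :
    (chiBinomialSum (r * p) : R) = χ (p : ZMod 3) * chiBinomialSum r := by
  have hext : chiBinomialSum (r * p) =
      ∑ d ∈ range ((r + 1) * p), χ (d : ZMod 3) * (2 * (r * p)).choose (r * p + d) := by
    refine sum_subset (range_subset_range.mpr (by nlinarith [hp.pos])) fun d _ hd => ?_
    rw [mem_range, not_lt] at hd
    rw [Nat.choose_eq_zero_of_lt (by omega), Nat.cast_zero, mul_zero]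
  rw [hext, sum_range_mul_eq_sum_sum, chiBinomialSum]
  push_cast
  rw [mul_sum]
  refine sum_congr rfl fun e _ => ?_
  have hblock := sum_range_chi_mul_choose_mul_add hp hR hodd h3 (e * p) (2 * r) (r + e)
  rw [show 2 * (r * p) = 2 * r * p by ring]
  simp only [show ∀ f, r * p + (e * p + f) = (r + e) * p + f from fun f => by ring]
  rw [hblock, map_mul]
  push_cast
  ring

end SqZero

theorem sum_centralBinom_rp_mod_p_sq_general (p : ℕ) (hp : p.Prime) (hp5 : 5 ≤ p)
    (r : ℕ) :
    (p % 3 = 1 → (∑ n ∈ Finset.range (r * p), (Nat.centralBinom n : ZMod (p ^ 2))) =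
      ∑ n ∈ Finset.range r, (Nat.centralBinom n : ZMod (p ^ 2))) ∧
    (p % 3 = 2 → (∑ n ∈ Finset.range (r * p), (Nat.centralBinom n : ZMod (p ^ 2))) =
      -∑ n ∈ Finset.range r, (Nat.centralBinom n : ZMod (p ^ 2))) := by
  have hR : (p : ZMod (p ^ 2)) ^ 2 = 0 := by rw [← Nat.cast_pow, ZMod.natCast_self]
  have hodd : Odd p := hp.odd_of_ne_two (by omega)
  have key (h3 : (p : ZMod 3) ≠ 0) : ∑ n ∈ range (r * p), (n.centralBinom : ZMod (p ^ 2)) =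
      χ (p : ZMod 3) * ∑ n ∈ range r, (n.centralBinom : ZMod (p ^ 2)) := by
    simpa [← sum_range_centralBinom_eq_chiBinomialSum] using
      natCast_chiBinomialSum_mul hp hR hodd h3 r
  have hp3 : (p : ZMod 3) = (p % 3 : ℕ) := (ZMod.natCast_mod p 3).symm
  refine ⟨fun h => ?_, fun h => ?_⟩
  · rw [h, Nat.cast_one] at hp3
    rw [key (by rw [hp3]; decide), hp3]
    simp
  · rw [h] at hp3
    rw [key (by rw [hp3]; decide), hp3, show χ ((2 : ℕ) : ZMod 3) = -1 by decide]
    simp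

theorem sum_centralBinom_rp_mod_p_sq (p : ℕ) (hp : p.Prime) (hp5 : 5 ≤ p)
    (r : ℕ) (hr : 0 < r) :
    (p % 3 = 1 → (∑ n ∈ Finset.range (r * p), (Nat.centralBinom n : ZMod (p ^ 2))) =
      ∑ n ∈ Finset.range r, (Nat.centralBinom n : ZMod (p ^ 2))) ∧
    (p % 3 = 2 → (∑ n ∈ Finset.range (r * p), (Nat.centralBinom n : ZMod (p ^ 2))) =
      -∑ n ∈ Finset.range r, (Nat.centralBinom n : ZMod (p ^ 2))) :=
  sum_centralBinom_rp_mod_p_sq_general p hp hp5 r
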